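/- Let Q(n) (n ≥ 4) be the quiver with vertices 1,...,n, arrows π_1: 3 → 1, π_2: 3 → 2, and arrows i+1 → i for 3 ≤ i ≤ n−1. Then the full subcategory B̌ of representations M with (π_1,π_2): M_3 → M_1 ⊕ M_2 bijective is equivalent, as a k-category, to the category of all representations of Q(n−1). An explicit equivalence η: Rep Q(n−1) → B̌ sends a representation (M_1, M_2, M_3,...,M_{n−1}; π_1, π_2, ...) to the representation of Q(n) having M_1 ⊕ M_2 at vertex 3, M_{i−1} at vertex i for i ≥ 4, the two canonical projections M_1 ⊕ M_2 → M_1 and M_1 ⊕ M_2 → M_2 at the short arms, and the map (π_1,π_2): M_3 → M_1 ⊕ M_2 as the map from vertex 4 to vertex 3. -/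

import Mathlib

/-! A framework for representations of the quiver `Q(n)` of type `D_n` (`n = m + 3`):
vertices `1, 2` (two tips, here `T1`, `T2`), and an arm `3, 4, ..., n` (here `A 0, ..., A m`),
with arrows `π₁ : 3 → 1`, `π₂ : 3 → 2` (here `p1`, `p2`) and `i+1 → i` for `3 ≤ i < n`
(here `f i : A i.succ →ₗ A i.castSucc`). -/

structure DRep (k : Type) [Field k] (m : ℕ) where
  T1 : Type
  T2 : Type
  A : Fin (m + 1) → Type
  [acg1 : AddCommGroup T1]
  [mod1 : Module k T1]
  [acg2 : AddCommGroup T2]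
  [mod2 : Module k T2]
  [acgA : ∀ i, AddCommGroup (A i)]
  [modA : ∀ i, Module k (A i)]
  p1 : A ⟨0, Nat.succ_pos m⟩ →ₗ[k] T1
  p2 : A ⟨0, Nat.succ_pos m⟩ →ₗ[k] T2
  f : ∀ i : Fin m, A i.succ →ₗ[k] A i.castSucc

attribute [instance] DRep.acg1 DRep.mod1 DRep.acg2 DRep.mod2 DRep.acgA DRep.modA

namespace DRep

variable {k : Type} [Field k] {m : ℕ}

/-- A morphism of representations of `Q(m+3)`. -/
structure Hom (M N : DRep k m) where
  g1 : M.T1 →ₗ[k] N.T1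
  g2 : M.T2 →ₗ[k] N.T2
  gA : ∀ i, M.A i →ₗ[k] N.A i
  comm1 : ∀ x, g1 (M.p1 x) = N.p1 (gA ⟨0, Nat.succ_pos m⟩ x)
  comm2 : ∀ x, g2 (M.p2 x) = N.p2 (gA ⟨0, Nat.succ_pos m⟩ x)
  commf : ∀ (i : Fin m) x, gA i.castSucc (M.f i x) = N.f i (gA i.succ x)

/-- An isomorphism of representations of `Q(m+3)`. -/
structure Iso (M N : DRep k m) where
  g1 : M.T1 ≃ₗ[k] N.T1
  g2 : M.T2 ≃ₗ[k] N.T2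
  gA : ∀ i, M.A i ≃ₗ[k] N.A i
  comm1 : ∀ x, g1 (M.p1 x) = N.p1 (gA ⟨0, Nat.succ_pos m⟩ x)
  comm2 : ∀ x, g2 (M.p2 x) = N.p2 (gA ⟨0, Nat.succ_pos m⟩ x)
  commf : ∀ (i : Fin m) x, gA i.castSucc (M.f i x) = N.f i (gA i.succ x)

/-- The identity morphism. -/
def Hom.id (M : DRep k m) : Hom M M :=
  ⟨LinearMap.id, LinearMap.id, fun _ => LinearMap.id,
    fun _ => rfl, fun _ => rfl, fun _ _ => rfl⟩

/-- Composition of morphisms. -/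
def Hom.comp {M N P : DRep k m} (ψ : Hom N P) (φ : Hom M N) : Hom M P where
  g1 := ψ.g1.comp φ.g1
  g2 := ψ.g2.comp φ.g2
  gA i := (ψ.gA i).comp (φ.gA i)
  comm1 x := by simp only [LinearMap.comp_apply]; rw [φ.comm1, ψ.comm1]
  comm2 x := by simp only [LinearMap.comp_apply]; rw [φ.comm2, ψ.comm2]
  commf i x := by simp only [LinearMap.comp_apply]; rw [φ.commf, ψ.commf]

/-- The (binary) direct sum of two representations. -/
def prod (M N : DRep k m) : DRep k m where
  T1 := M.T1 × N.T1
  T2 := M.T2 × N.T2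
  A i := M.A i × N.A i
  acgA i := inferInstanceAs (AddCommGroup (M.A i × N.A i))
  modA i := inferInstanceAs (Module k (M.A i × N.A i))
  p1 := M.p1.prodMap N.p1
  p2 := M.p2.prodMap N.p2
  f i := (M.f i).prodMap (N.f i)

/-- The direct sum of an arbitrary family of representations. -/
noncomputable def dsum {ι : Type} (F : ι → DRep k m) : DRep k m :=
  letI := Classical.decEq ι
  { T1 := DirectSum ι fun i => (F i).T1
    T2 := DirectSum ι fun i => (F i).T2
    A := fun v => DirectSum ι fun i => (F i).A v
    acgA := fun v => inferInstanceAs (AddCommGroup (DirectSum ι fun i => (F i).A v))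
    modA := fun v => inferInstanceAs (Module k (DirectSum ι fun i => (F i).A v))
    p1 := DirectSum.toModule k ι (DirectSum ι fun i => (F i).T1)
      fun i => (DirectSum.lof k ι (fun j => (F j).T1) i).comp ((F i).p1)
    p2 := DirectSum.toModule k ι (DirectSum ι fun i => (F i).T2)
      fun i => (DirectSum.lof k ι (fun j => (F j).T2) i).comp ((F i).p2)
    f := fun v => DirectSum.toModule k ι (DirectSum ι fun i => (F i).A v.castSucc)
      fun i => (DirectSum.lof k ι (fun j => (F j).A v.castSucc) i).comp ((F i).f v) }

/-- The zero representation predicate. -/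
def IsZero (M : DRep k m) : Prop :=
  (∀ x : M.T1, x = 0) ∧ (∀ x : M.T2, x = 0) ∧ ∀ i, ∀ x : M.A i, x = 0

/-- Indecomposability: nonzero, and any direct sum decomposition has a zero summand. -/
def Indecomposable (M : DRep k m) : Prop :=
  ¬ M.IsZero ∧ ∀ N₁ N₂ : DRep k m, Nonempty (Iso M (N₁.prod N₂)) → N₁.IsZero ∨ N₂.IsZero

/-- Thin: all vertex spaces of dimension at most `1`. -/
def Thin (M : DRep k m) : Prop :=
  Module.rank k M.T1 ≤ 1 ∧ Module.rank k M.T2 ≤ 1 ∧ ∀ i, Module.rank k (M.A i) ≤ 1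

/-- All vertex spaces finite-dimensional. -/
def FinDim (M : DRep k m) : Prop :=
  FiniteDimensional k M.T1 ∧ FiniteDimensional k M.T2 ∧ ∀ i, FiniteDimensional k (M.A i)

/-- Membership in the subcategory `B̌`: the combined map
`(π₁, π₂) : M₃ → M₁ ⊕ M₂` is bijective. -/
def InB (M : DRep k m) : Prop :=
  Function.Bijective (fun x : M.A ⟨0, Nat.succ_pos m⟩ => (M.p1 x, M.p2 x))

end DRep

section Eta

variable {k : Type} [Field k] {m : ℕ}

/-- The vertex spaces of `η N`: `N.T1 × N.T2` at the branch vertex (arm index `0`,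
i.e. vertex `3`), and the shifted arm spaces of `N` further out. -/
def etaA (N : DRep k m) : Fin (m + 2) → Type := fun i =>
  match i with
  | ⟨0, _⟩ => N.T1 × N.T2
  | ⟨j + 1, h⟩ => N.A ⟨j, by omega⟩

instance etaAacg (N : DRep k m) (i : Fin (m + 2)) : AddCommGroup (etaA N i) :=
  match i with
  | ⟨0, _⟩ => inferInstanceAs (AddCommGroup (N.T1 × N.T2))
  | ⟨j + 1, h⟩ => inferInstanceAs (AddCommGroup (N.A ⟨j, by omega⟩))

instance etaAmod (N : DRep k m) (i : Fin (m + 2)) : Module k (etaA N i) :=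
  match i with
  | ⟨0, _⟩ => inferInstanceAs (Module k (N.T1 × N.T2))
  | ⟨j + 1, h⟩ => inferInstanceAs (Module k (N.A ⟨j, by omega⟩))

/-- The arm maps of `η N`: the map from vertex `4` to vertex `3` is
`(π₁, π₂) : N₃ → N₁ ⊕ N₂`, and further out the arm maps of `N`. -/
def etaF (N : DRep k m) : ∀ i : Fin (m + 1), etaA N i.succ →ₗ[k] etaA N i.castSucc :=
  fun i =>
  match i with
  | ⟨0, _⟩ => LinearMap.prod N.p1 N.p2
  | ⟨j + 1, h⟩ => N.f ⟨j, by omega⟩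

/-- The functor `η : Rep Q(n-1) → Rep Q(n)` on objects (here `DRep k m → DRep k (m+1)`,
`n = m + 4`): vertex `3` receives `M₁ ⊕ M₂` (with the two canonical projections as the maps
to vertices `1` and `2`), vertex `i` (`i ≥ 4`) receives `M_{i-1}`, and the map from vertex
`4` to vertex `3` is `(π₁, π₂) : M₃ → M₁ ⊕ M₂`. -/
def eta (N : DRep k m) : DRep k (m + 1) where
  T1 := N.T1
  T2 := N.T2
  A := etaA N
  acgA := etaAacg N
  modA := etaAmod N
  p1 := LinearMap.fst k N.T1 N.T2
  p2 := LinearMap.snd k N.T1 N.T2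
  f := etaF N

end Eta

/-! An object of `B̌` is recovered from its arm beyond vertex `3`: identifying `M₃` with
`M₁ ⊕ M₂` through the bijection `(π₁, π₂)`, the arrow `4 → 3` becomes a map `M₄ → M₁ ⊕ M₂`,
whose two components are the short arms of a representation of `Q(n-1)`. On morphisms, the
component at vertex `3` of a morphism `η M → η N` commutes with both projections, so it is
forced to be `g₁ × g₂`; hence `η` is fully faithful. -/

namespace DRep

variable {k : Type} [Field k] {m : ℕ}

theorem Hom.ext {M N : DRep k m} {φ ψ : Hom M N} (h1 : φ.g1 = ψ.g1) (h2 : φ.g2 = ψ.g2)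
    (hA : φ.gA = ψ.gA) : φ = ψ := by
  cases φ; cases ψ
  cases h1; cases h2; cases hA
  rfl

theorem eta_inB (N : DRep k m) : (eta N).InB :=
  Function.bijective_id

def etaMapA {M N : DRep k m} (φ : Hom M N) : ∀ i : Fin (m + 2), etaA M i →ₗ[k] etaA N i
  | ⟨0, _⟩ => φ.g1.prodMap φ.g2
  | ⟨j + 1, _⟩ => φ.gA ⟨j, by omega⟩

def etaMap {M N : DRep k m} (φ : Hom M N) : Hom (eta M) (eta N) where
  g1 := φ.g1
  g2 := φ.g2
  gA := etaMapA φ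
  comm1 _ := rfl
  comm2 _ := rfl
  commf
    | ⟨0, _⟩, x => Prod.ext (φ.comm1 x) (φ.comm2 x)
    | ⟨j + 1, _⟩, x => φ.commf ⟨j, by omega⟩ x

theorem etaMap_id (M : DRep k m) : etaMap (Hom.id M) = Hom.id (eta M) :=
  Hom.ext rfl rfl <| funext fun
    | ⟨0, _⟩ => LinearMap.prodMap_id
    | ⟨_ + 1, _⟩ => rfl

theorem etaMap_comp {M N P : DRep k m} (φ : Hom M N) (ψ : Hom N P) :
    etaMap (ψ.comp φ) = (etaMap ψ).comp (etaMap φ) :=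
  Hom.ext rfl rfl <| funext fun
    | ⟨0, _⟩ => (LinearMap.prodMap_comp _ _ _ _).symm
    | ⟨_ + 1, _⟩ => rfl

def etaMapInv {M N : DRep k m} (Ψ : Hom (eta M) (eta N)) : Hom M N where
  g1 := Ψ.g1
  g2 := Ψ.g2
  gA i := Ψ.gA i.succ
  comm1 x := (Ψ.comm1 (M.p1.prod M.p2 x)).trans (congrArg Prod.fst (Ψ.commf 0 x))
  comm2 x := (Ψ.comm2 (M.p1.prod M.p2 x)).trans (congrArg Prod.snd (Ψ.commf 0 x))
  commf i x := Ψ.commf i.succ x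

theorem etaMapInv_etaMap {M N : DRep k m} (φ : Hom M N) : etaMapInv (etaMap φ) = φ :=
  Hom.ext rfl rfl rfl

theorem etaMap_etaMapInv {M N : DRep k m} (Ψ : Hom (eta M) (eta N)) :
    etaMap (etaMapInv Ψ) = Ψ :=
  Hom.ext rfl rfl <| funext fun
    | ⟨0, _⟩ => LinearMap.ext fun x => Prod.ext (Ψ.comm1 x) (Ψ.comm2 x)
    | ⟨_ + 1, _⟩ => rfl

theorem etaMap_bijective (M N : DRep k m) :
    Function.Bijective (etaMap : Hom M N → Hom (eta M) (eta N)) :=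
  Function.bijective_iff_has_inverse.mpr ⟨etaMapInv, etaMapInv_etaMap, etaMap_etaMapInv⟩

def etaPreimage (P : DRep k (m + 1)) : DRep k m where
  T1 := P.T1
  T2 := P.T2
  A i := P.A i.succ
  p1 := P.p1 ∘ₗ P.f 0
  p2 := P.p2 ∘ₗ P.f 0
  f i := P.f i.succ

noncomputable def etaPreimageIso (P : DRep k (m + 1)) (hP : P.InB) :
    Iso (eta (etaPreimage P)) P :=
  let e := LinearEquiv.ofBijective (P.p1.prod P.p2) hP
  { g1 := LinearEquiv.refl k P.T1
    g2 := LinearEquiv.refl k P.T2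
    gA := fun
      | ⟨0, _⟩ => e.symm
      | ⟨j + 1, h⟩ => LinearEquiv.refl k (P.A ⟨j + 1, h⟩)
    comm1 := fun x => (congrArg Prod.fst (e.apply_symm_apply x)).symm
    comm2 := fun x => (congrArg Prod.snd (e.apply_symm_apply x)).symm
    commf := fun
      | ⟨0, _⟩, x => e.symm_apply_apply (P.f 0 x)
      | ⟨_ + 1, _⟩, _ => rfl }

end DRep

/-- The full subcategory `B̌` of representations of `Q(n)` (`n = m + 4`)
with `(π₁, π₂) : M₃ → M₁ ⊕ M₂` bijective is equivalent to the category of all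
representations of `Q(n-1)`, via the explicit functor `η`: `η` lands in `B̌`, it extends to
morphisms functorially and fully faithfully, and every representation in `B̌` is isomorphic
to one in the image of `η`. -/
theorem stmt12 (k : Type) [Field k] (m : ℕ) :
    (∀ N : DRep k m, (eta N).InB) ∧
    (∃ etaHom : ∀ M N : DRep k m, DRep.Hom M N → DRep.Hom (eta M) (eta N),
      (∀ M : DRep k m, etaHom M M (DRep.Hom.id M) = DRep.Hom.id (eta M)) ∧
      (∀ (M N P : DRep k m) (φ : DRep.Hom M N) (ψ : DRep.Hom N P),
        etaHom M P (ψ.comp φ) = (etaHom N P ψ).comp (etaHom M N φ)) ∧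
      (∀ M N : DRep k m, Function.Bijective (etaHom M N))) ∧
    (∀ P : DRep k (m + 1), P.InB → ∃ N : DRep k m, Nonempty (DRep.Iso (eta N) P)) := by
  refine ⟨DRep.eta_inB, ⟨fun _ _ => DRep.etaMap, DRep.etaMap_id, fun _ _ _ => DRep.etaMap_comp,
    DRep.etaMap_bijective⟩, fun P hP => ⟨P.etaPreimage, ⟨P.etaPreimageIso hP⟩⟩⟩
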